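/- Let (π, K) be a ĝ[σ]-module structure on a complex vector space W that lies in category C, and let π_R and π_E = π − π_R be as defined from the projection ψ_R. Then: (a) (π_R, K) is again a ĝ[σ]-module structure on W, i.e. K commutes with every π_R(u) and [π_R(u), π_R(v)] = π_R([u,v]) + γ(u,v) K for all u, v ∈ L(g,σ); (b) π_E is a Lie algebra homomorphism from L(g,σ) to End(W), i.e. [π_E(u), π_E(v)] = π_E([u,v]) for all u, v; (c) [π_R(u), π_E(v)] = 0 for all u, v ∈ L(g,σ); (d) (W, (π_R, K)) is restricted; (e) there is a nonzero polynomial p ∈ ℂ[X] such that π_E((s^k p(s^N)) ⊗ a) = 0 for all k ∈ ℤ and a ∈ g_k; (f) if (W, (π, K)) is irreducible, then the only subspaces of W invariant under K and under all the operators π_R(u) and π_E(v) (u, v ∈ L(g,σ)) are 0 and W. -/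

import Mathlib

/-!
Write `x` for the operator `(x·a)_k = a_{k+N}` on `F(W)`. An eventually vanishing series killed
by a nonzero polynomial in `x` vanishes: solving `p·f = 0` for the mode of `f` at the trailing
degree of `p` expresses each mode through modes further right. So `E(W) ∩ Ē₀(W) = 0`, and the
splitting `f = e + n` with `e ∈ E(W)`, `p·n = 0` is unique. For `f = π_a` the singular part,
killed by some `q`, is killed by the uniform `p` of category `C`: `p·n` lies in `E(W)` and is
killed by `q`. Any operation on `F(W)` commuting with
`x` and preserving `E(W)` — multiplying modes by a fixed operator on either side, shifting, or
multiplying by an `N`-periodic weight — therefore respects the splitting. The commutator relations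
`[π_a(k), π_b(l)] = π_{[a,b]}(k+l) + δ_{k+l,0} (k/N) B(a,b) K` split, first in `k` and then in
`l`, into relations for the regular parts `π_R`, the singular parts `π_E` and their mixed brackets.
-/

open scoped TensorProduct

noncomputable section
namespace Twisted

variable (g : Type) [LieRing g] [LieAlgebra ℂ g]

abbrev Amb : Type := LaurentPolynomial ℂ ⊗[ℂ] g

instance : LieAlgebra ℂ (Amb g) :=
  { (inferInstance : Module ℂ (Amb g)) with
    lie_smul := fun c x y => by
      rw [← algebraMap_smul (LaurentPolynomial ℂ) c y,
        lie_smul (R := LaurentPolynomial ℂ) (algebraMap ℂ (LaurentPolynomial ℂ) c) x y,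
        algebraMap_smul] }

/-- `ε = exp(2πi/N)`. -/
def eps (N : ℕ) : ℂ := Complex.exp (2 * (Real.pi : ℂ) * Complex.I / (N : ℂ))

variable (σ : g ≃ₗ⁅ℂ⁆ g) (N : ℕ)

/-- `a ∈ g_k`, i.e. `σ a = ε^k • a`. -/
def homog (k : ℤ) (a : g) : Prop := σ a = eps N ^ k • a

/-- The generators `s^k ⊗ a`, for `a ∈ g_k`. -/
def genSet : Set (Amb g) :=
  {x | ∃ (k : ℤ) (a : g), homog g σ N k a ∧ x = LaurentPolynomial.T k ⊗ₜ[ℂ] a}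

/-- The twisted loop algebra `L(g,σ)`, the Lie subalgebra of `ℂ[s,s⁻¹] ⊗ g`
spanned by the elements `s^k ⊗ a` with `a ∈ g_k`. -/
def Loop : LieSubalgebra ℂ (Amb g) := LieSubalgebra.lieSpan ℂ (Amb g) (genSet g σ N)

/-- The element `s^k ⊗ a` of `L(g,σ)`, for `a ∈ g_k`. -/
def sGen (k : ℤ) (a : g) (h : homog g σ N k a) : Loop g σ N :=
  ⟨LaurentPolynomial.T k ⊗ₜ[ℂ] a, LieSubalgebra.subset_lieSpan ⟨k, a, h, rfl⟩⟩

/-- The element `(s^k p(s^N)) ⊗ a` of `L(g,σ)`, for `a ∈ g_k`. -/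
def sPolyGen (p : Polynomial ℂ) (k : ℤ) (a : g)
    (h : ∀ i : ℕ, homog g σ N (k + N * i) a) : Loop g σ N :=
  ∑ i ∈ Finset.range (p.natDegree + 1), p.coeff i • sGen g σ N (k + N * i) a (h i)

variable (N : ℕ) (W : Type) [AddCommGroup W] [Module ℂ W]

/-- The shift operator on `F(W) = (ℤ → End W)`, encoding multiplication by `x`:
`(x·a)_k = a_{k+N}`. -/
def shiftE : Module.End ℂ (ℤ → Module.End ℂ W) where
  toFun a := fun k => a (k + N)
  map_add' _ _ := rfl
  map_smul' _ _ := rfl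

/-- The action of `ℂ[x]` on `F(W)`. -/
def polyAct (p : Polynomial ℂ) (a : ℤ → Module.End ℂ W) : ℤ → Module.End ℂ W :=
  Polynomial.aeval (shiftE N W) p a

/-- Membership in `E(W)`. -/
def memE (a : ℤ → Module.End ℂ W) : Prop :=
  ∀ w : W, ∃ M : ℤ, ∀ k ≥ M, a k w = 0

/-- Membership in `Ē(W)`. -/
def memEbar (a : ℤ → Module.End ℂ W) : Prop :=
  ∃ p : Polynomial ℂ, p ≠ 0 ∧ memE W (polyAct N W p a)

/-- Membership in `Ē₀(W)`. -/
def memE0 (a : ℤ → Module.End ℂ W) : Prop :=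
  ∃ p : Polynomial ℂ, p ≠ 0 ∧ polyAct N W p a = 0

variable (g : Type) [LieRing g] [LieAlgebra ℂ g] (σ : g ≃ₗ⁅ℂ⁆ g) (N : ℕ)
variable (B : LinearMap.BilinForm ℂ g)

/-- `γ` is the bilinear form on `L(g,σ)` with
`γ(s^m ⊗ a, s^n ⊗ b) = (m/N) B(a,b) δ_{m+n,0}`. -/
def IsGamma (γ : Loop g σ N →ₗ[ℂ] Loop g σ N →ₗ[ℂ] ℂ) : Prop :=
  ∀ (m n : ℤ) (a b : g) (ha : homog g σ N m a) (hb : homog g σ N n b),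
    γ (sGen g σ N m a ha) (sGen g σ N n b hb) =
      if m + n = 0 then (m : ℂ) / (N : ℂ) * B a b else 0

variable (W : Type) [AddCommGroup W] [Module ℂ W]

/-- `(π, K)` is a `ĝ[σ]`-module structure on `W` (relative to the form `γ`). -/
def IsHatMod (π : Loop g σ N →ₗ[ℂ] Module.End ℂ W) (K : Module.End ℂ W)
    (γ : Loop g σ N →ₗ[ℂ] Loop g σ N →ₗ[ℂ] ℂ) : Prop :=
  (∀ u, K * π u = π u * K) ∧
  (∀ u v, π u * π v - π v * π u = π ⁅u, v⁆ + γ u v • K)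

/-- `(π, K)` is restricted. -/
def IsRestricted (π : Loop g σ N →ₗ[ℂ] Module.End ℂ W) : Prop :=
  ∀ (w : W) (i : ℤ) (a : g), homog g σ N i a →
    ∃ M : ℤ, ∀ k ≥ M, ∀ h : homog g σ N k a, π (sGen g σ N k a h) w = 0

/-- `(π, K)` is irreducible. -/
def IsIrred (π : Loop g σ N →ₗ[ℂ] Module.End ℂ W) (K : Module.End ℂ W) : Prop :=
  Nontrivial W ∧ ∀ S : Submodule ℂ W, (∀ x ∈ S, K x ∈ S) →
    (∀ u, ∀ x ∈ S, π u x ∈ S) → S = ⊥ ∨ S = ⊤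

open scoped Classical in
/-- The generating function `π_a ∈ F(W)` attached to a homogeneous element `a`. -/
def piFun (π : Loop g σ N →ₗ[ℂ] Module.End ℂ W) (a : g) : ℤ → Module.End ℂ W :=
  fun k => if h : homog g σ N k a then π (sGen g σ N k a h) else 0

/-- `(π, K)` lies in category `C`. -/
def InCatC (π : Loop g σ N →ₗ[ℂ] Module.End ℂ W) : Prop :=
  ∃ p : Polynomial ℂ, p ≠ 0 ∧ ∀ (i : ℤ) (a : g), homog g σ N i a →
    memE W (polyAct N W p (piFun g σ N W π a))

/-- `πR` is the map `π_R` determined by `π_R(s^k ⊗ a) = (ψ_R(π_a))_k`,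
where `ψ_R(π_a)` is the projection of `π_a` to `E(W)` along `Ē₀(W)`. -/
def IsPiR (π πR : Loop g σ N →ₗ[ℂ] Module.End ℂ W) : Prop :=
  ∀ a : g, (∃ i : ℤ, homog g σ N i a) →
    ∃ e : ℤ → Module.End ℂ W, memE W e ∧ memE0 N W (piFun g σ N W π a - e) ∧
      ∀ (k : ℤ) (h : homog g σ N k a), πR (sGen g σ N k a h) = e k

attribute [local instance] LieRing.ofAssociativeRing

section Splitting
variable {N : ℕ} {W : Type} [AddCommGroup W] [Module ℂ W] {p : Polynomial ℂ}

lemma shiftE_pow_apply (i : ℕ) (f : ℤ → Module.End ℂ W) (k : ℤ) :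
    (shiftE N W ^ i) f k = f (k + N * i) := by
  induction i generalizing f k with
  | zero => simp
  | succ i ih =>
    rw [pow_succ, Module.End.mul_apply, ih]
    exact congrArg f (by push_cast; ring)

lemma polyAct_apply (p : Polynomial ℂ) (f : ℤ → Module.End ℂ W) (k : ℤ) :
    polyAct N W p f k = ∑ i ∈ Finset.range (p.natDegree + 1), p.coeff i • f (k + N * i) := by
  rw [polyAct, Polynomial.aeval_eq_sum_range, LinearMap.sum_apply, Finset.sum_apply]
  simp [shiftE_pow_apply]

lemma polyAct_sub (p : Polynomial ℂ) (f h : ℤ → Module.End ℂ W) :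
    polyAct N W p (f - h) = polyAct N W p f - polyAct N W p h :=
  map_sub _ f h

lemma polyAct_add (p : Polynomial ℂ) (f h : ℤ → Module.End ℂ W) :
    polyAct N W p (f + h) = polyAct N W p f + polyAct N W p h :=
  map_add _ f h

lemma polyAct_polyAct_comm (p q : Polynomial ℂ) (f : ℤ → Module.End ℂ W) :
    polyAct N W p (polyAct N W q f) = polyAct N W q (polyAct N W p f) := by
  simp only [polyAct, ← Module.End.mul_apply, ← map_mul, mul_comm]

lemma polyAct_map_of_commute {φ : Module.End ℂ (ℤ → Module.End ℂ W)}
    (hφ : Commute φ (shiftE N W)) (p : Polynomial ℂ) (f : ℤ → Module.End ℂ W) :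
    polyAct N W p (φ f) = φ (polyAct N W p f) :=
  LinearMap.congr_fun (Algebra.commute_of_mem_adjoin_singleton_of_commute
    (Polynomial.aeval_mem_adjoin_singleton ℂ _) hφ).eq.symm f

lemma memE_add {f h : ℤ → Module.End ℂ W} (hf : memE W f) (hh : memE W h) :
    memE W (f + h) := fun w => by
  obtain ⟨M₁, h₁⟩ := hf w
  obtain ⟨M₂, h₂⟩ := hh w
  exact ⟨max M₁ M₂, fun k hk => by
    simp [h₁ k (le_of_max_le_left hk), h₂ k (le_of_max_le_right hk)]⟩

lemma memE_neg {f : ℤ → Module.End ℂ W} (hf : memE W f) : memE W (-f) :=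
  fun w => (hf w).imp fun _ hM k hk => by simp [hM k hk]

lemma memE_sub {f h : ℤ → Module.End ℂ W} (hf : memE W f) (hh : memE W h) :
    memE W (f - h) :=
  sub_eq_add_neg f h ▸ memE_add hf (memE_neg hh)

lemma memE_polyAct (p : Polynomial ℂ) {f : ℤ → Module.End ℂ W} (hf : memE W f) :
    memE W (polyAct N W p f) := fun w => by
  obtain ⟨M, hM⟩ := hf w
  refine ⟨M, fun k hk => ?_⟩
  rw [polyAct_apply, LinearMap.sum_apply]
  exact Finset.sum_eq_zero fun i _ => by
    rw [LinearMap.smul_apply, hM _ (le_add_of_le_of_nonneg hk (by positivity)), smul_zero]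

theorem eq_zero_of_memE_of_polyAct_eq_zero (hN : 0 < N) (hp : p ≠ 0)
    {f : ℤ → Module.End ℂ W} (hf : memE W f) (h : polyAct N W p f = 0) : f = 0 := by
  set t := p.natTrailingDegree
  have ht : p.coeff t ≠ 0 := Polynomial.coeff_natTrailingDegree_ne_zero.mpr hp
  funext k
  refine LinearMap.ext fun w => ?_
  obtain ⟨M, hM⟩ := hf w
  suffices ∀ j : ℕ, ∀ k ≥ M - j, f k w = 0 from this (M - k).toNat k (by omega)
  intro j
  induction j with
  | zero => simpa using hM
  | succ j ih =>
    intro k hk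
    push_cast at hk
    have hrel : polyAct N W p f (k - N * t) w = 0 := by rw [h]; rfl
    rw [polyAct_apply, LinearMap.sum_apply, Finset.sum_eq_single_of_mem t
      (Finset.mem_range.mpr (Nat.lt_succ_of_le p.natTrailingDegree_le_natDegree))] at hrel
    · simpa [ht] using hrel
    · intro i _ hit
      rcases lt_or_gt_of_ne hit with hlt | hgt
      · simp [Polynomial.coeff_eq_zero_of_lt_natTrailingDegree hlt]
      · have : (N : ℤ) * t + N ≤ N * i := by
          rw [← mul_add_one]; exact mul_le_mul_of_nonneg_left (by omega) (by positivity)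
        simp [ih (k - N * t + N * i) (by omega)]

variable (N) in
/-- `e` is the component of `f` in `E(W)` for the decomposition `f ∈ E(W) ⊕ Ē₀(W)`, the component
in `Ē₀(W)` being annihilated by `p`. -/
def IsSplit (p : Polynomial ℂ) (f e : ℤ → Module.End ℂ W) : Prop :=
  memE W e ∧ polyAct N W p (f - e) = 0

namespace IsSplit

variable {f e f' e' : ℤ → Module.End ℂ W}

theorem unique (hN : 0 < N) (hp : p ≠ 0) (h : IsSplit N p f e)
    (h' : IsSplit N p f e') : e = e' := by
  have hdiff : e - e' = (f - e') - (f - e) := by abel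
  refine sub_eq_zero.mp (eq_zero_of_memE_of_polyAct_eq_zero hN hp (memE_sub h.1 h'.1) ?_)
  rw [hdiff, polyAct_sub, h.2, h'.2, sub_zero]

theorem of_memE (hf : memE W f) : IsSplit N p f f :=
  ⟨hf, by rw [sub_self]; exact map_zero _⟩

theorem of_polyAct_eq_zero (hf : polyAct N W p f = 0) : IsSplit N p f 0 :=
  ⟨fun _ => ⟨0, fun _ _ => rfl⟩, by rwa [sub_zero]⟩

theorem add (h : IsSplit N p f e) (h' : IsSplit N p f' e') :
    IsSplit N p (f + f') (e + e') :=
  ⟨memE_add h.1 h'.1, by rw [add_sub_add_comm, polyAct_add, h.2, h'.2, add_zero]⟩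

theorem sub (h : IsSplit N p f e) (h' : IsSplit N p f' e') :
    IsSplit N p (f - f') (e - e') :=
  ⟨memE_sub h.1 h'.1, by rw [sub_sub_sub_comm, polyAct_sub, h.2, h'.2, sub_zero]⟩

theorem map {φ : Module.End ℂ (ℤ → Module.End ℂ W)} (hφS : Commute φ (shiftE N W))
    (hφE : ∀ f, memE W f → memE W (φ f)) (h : IsSplit N p f e) :
    IsSplit N p (φ f) (φ e) :=
  ⟨hφE e h.1, by rw [← map_sub, polyAct_map_of_commute hφS, h.2, map_zero]⟩

theorem mul_left (T : Module.End ℂ W) (h : IsSplit N p f e) :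
    IsSplit N p (fun k => T * f k) (fun k => T * e k) :=
  h.map (φ := LinearMap.compLeft (LinearMap.mul ℂ _ T) ℤ) rfl fun f hf w => by
    obtain ⟨M, hM⟩ := hf w
    exact ⟨M, fun k hk => by simp [hM k hk]⟩

theorem mul_right (T : Module.End ℂ W) (h : IsSplit N p f e) :
    IsSplit N p (fun k => f k * T) (fun k => e k * T) :=
  h.map (φ := LinearMap.compLeft ((LinearMap.mul ℂ _).flip T) ℤ) rfl fun _ hf v => hf (T v)

theorem lie_left (T : Module.End ℂ W) (h : IsSplit N p f e) :
    IsSplit N p (fun k => ⁅T, f k⁆) (fun k => ⁅T, e k⁆) := by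
  simp only [Ring.lie_def]
  exact (h.mul_left T).sub (h.mul_right T)

theorem lie_right (T : Module.End ℂ W) (h : IsSplit N p f e) :
    IsSplit N p (fun k => ⁅f k, T⁆) (fun k => ⁅e k, T⁆) := by
  simp only [Ring.lie_def]
  exact (h.mul_right T).sub (h.mul_left T)

theorem reweight {w : ℤ → ℂ} (hw : ∀ k, w (k + N) = w k) (l : ℤ) (h : IsSplit N p f e) :
    IsSplit N p (fun k => w k • f (k + l)) (fun k => w k • e (k + l)) := by
  let φ : Module.End ℂ (ℤ → Module.End ℂ W) :=
    { toFun := fun f k => w k • f (k + l)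
      map_add' := fun _ _ => funext fun _ => smul_add _ _ _
      map_smul' := fun c f => funext fun k => smul_comm (w k) c (f (k + l)) }
  refine h.map (φ := φ) (LinearMap.ext fun f => funext fun k => ?_) fun f hf v => ?_
  · simp [φ, shiftE, hw, add_right_comm]
  · obtain ⟨M, hM⟩ := hf v
    exact ⟨M - l, fun k hk => by simp [φ, hM (k + l) (by omega)]⟩

theorem lie_left_eq (hN : 0 < N) (hp : p ≠ 0) (T : Module.End ℂ W) (h : IsSplit N p f e)
    (h' : IsSplit N p f' e') (hff' : ∀ k, ⁅T, f k⁆ = f' k) (k : ℤ) : ⁅T, e k⁆ = e' k := by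
  have := h.lie_left T
  rw [funext hff'] at this
  exact congrFun (this.unique hN hp h') k

theorem lie_right_eq (hN : 0 < N) (hp : p ≠ 0) (T : Module.End ℂ W) (h : IsSplit N p f e)
    (h' : IsSplit N p f' e') (hff' : ∀ k, ⁅f k, T⁆ = f' k) (k : ℤ) : ⁅e k, T⁆ = e' k := by
  have := h.lie_right T
  rw [funext hff'] at this
  exact congrFun (this.unique hN hp h') k

theorem lie_eq_zero (hN : 0 < N) (hp : p ≠ 0) (T : Module.End ℂ W) (h : IsSplit N p f e)
    (hf : ∀ k, ⁅T, f k⁆ = 0) (k : ℤ) : ⁅T, e k⁆ = 0 :=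
  h.lie_left_eq hN hp T (of_polyAct_eq_zero (map_zero _)) hf k

theorem eq_zero_off_periodic (hN : 0 < N) (hp : p ≠ 0) {P : ℤ → Prop}
    (hP : ∀ k, P (k + N) ↔ P k) (h : IsSplit N p f e) (hf : ∀ k, ¬ P k → f k = 0)
    {k : ℤ} (hk : ¬ P k) : e k = 0 := by
  classical
  have hχ := h.reweight (w := fun k => if P k then 1 else 0) (by simp [hP]) 0
  simp only [add_zero, ite_smul, one_smul, zero_smul] at hχ
  rw [show (fun k => if P k then f k else 0) = f from funext fun k => by
    by_cases hk : P k <;> simp [hk, hf]] at hχ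
  simpa [hk] using congrFun (h.unique hN hp hχ) k

theorem lie_parts_of_lie (hN : 0 < N) (hp : p ≠ 0) {A B C eA eB eC : ℤ → Module.End ℂ W}
    {χA χB : ℤ → ℂ} {Z : ℤ → ℤ → Module.End ℂ W}
    (hA : IsSplit N p A eA) (hB : IsSplit N p B eB) (hC : IsSplit N p C eC)
    (hχA : ∀ k, χA (k + N) = χA k) (hχB : ∀ l, χB (l + N) = χB l)
    (hZ₁ : ∀ l, memE W fun k => Z k l) (hZ₂ : ∀ k, memE W fun l => Z k l)
    (hAB : ∀ k l, ⁅A k, B l⁆ = (χA k * χB l) • C (k + l) + Z k l) (k l : ℤ) :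
    ⁅eA k, eB l⁆ = (χA k * χB l) • eC (k + l) + Z k l ∧
    ⁅eA k, B l - eB l⁆ = 0 ∧
    ⁅A k - eA k, B l - eB l⁆ = (χA k * χB l) • (C (k + l) - eC (k + l)) := by
  have heA (l : ℤ) : ∀ k, ⁅eA k, B l⁆ = (χA k * χB l) • eC (k + l) + Z k l :=
    hA.lie_right_eq hN hp (B l)
      ((hC.reweight (fun k => by rw [hχA]) l).add (of_memE (hZ₁ l))) (hAB · l)
  have hnA : ∀ l, ⁅A k - eA k, B l⁆ = (χA k * χB l) • (C - eC) (k + l) := fun l => by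
    rw [sub_lie, hAB, heA, Pi.sub_apply, smul_sub]; abel
  have hee : ⁅eA k, eB l⁆ = (χA k * χB l) • eC (k + l) + Z k l := by
    refine hB.lie_left_eq hN hp (eA k) (of_memE (memE_add ?_ (hZ₂ k))) (heA · k) l
    simpa only [add_comm] using (of_memE (N := N) (p := p) hC.1).reweight
      (w := fun l => χA k * χB l) (fun l => by rw [hχB]) k |>.1
  have hne : ⁅A k - eA k, eB l⁆ = 0 := by
    refine hB.lie_left_eq hN hp (A k - eA k) (of_polyAct_eq_zero ?_) hnA l
    simpa only [add_comm, Pi.zero_apply, smul_zero, ← Pi.zero_def, sub_zero] using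
      (of_polyAct_eq_zero (N := N) hC.2).reweight
      (w := fun l => χA k * χB l) (fun l => by rw [hχB]) k |>.2
  refine ⟨hee, ?_, ?_⟩
  · rw [lie_sub, hee, heA, sub_self]
  · rw [lie_sub, hne, sub_zero, hnA, Pi.sub_apply]

end IsSplit

end Splitting

theorem _root_.LieSubalgebra.coe_lieSpan_eq_span_of_forall_lie_mem_span {R L : Type*} [CommRing R]
    [LieRing L] [LieAlgebra R L] {s : Set L}
    (hs : ∀ x ∈ s, ∀ y ∈ s, ⁅x, y⁆ ∈ Submodule.span R s) :
    (LieSubalgebra.lieSpan R L s : Submodule R L) = Submodule.span R s := by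
  suffices ∀ {x y}, x ∈ Submodule.span R s → y ∈ Submodule.span R s →
      ⁅x, y⁆ ∈ Submodule.span R s by
    refine le_antisymm ?_ LieSubalgebra.submodule_span_le_lieSpan
    change _ ≤ ({ Submodule.span R s with lie_mem' := this } : LieSubalgebra R L)
    rw [LieSubalgebra.lieSpan_le]
    exact Submodule.subset_span
  intro x y hx hy
  induction hx, hy using Submodule.span_induction₂ with
  | mem_mem x y hx hy => exact hs x hx y hy
  | zero_left y hy => simp
  | zero_right x hx => simp
  | add_left x y z _ _ _ hx hy => simpa only [add_lie] using add_mem hx hy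
  | add_right x y z _ _ _ hx hy => simpa only [lie_add] using add_mem hx hy
  | smul_left r x y _ _ h => simpa only [smul_lie] using Submodule.smul_mem _ r h
  | smul_right r x y _ _ h => simpa only [lie_smul] using Submodule.smul_mem _ r h

section LoopAlgebra
variable {g : Type} [LieRing g] [LieAlgebra ℂ g] {σ : g ≃ₗ⁅ℂ⁆ g} {N : ℕ}

lemma eps_pow_self (N : ℕ) : eps N ^ N = 1 := by
  rcases N.eq_zero_or_pos with rfl | hN
  · exact pow_zero _
  · exact (Complex.isPrimitiveRoot_exp N hN.ne').pow_eq_one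

lemma eps_ne_zero (N : ℕ) : eps N ≠ 0 := Complex.exp_ne_zero _

lemma homog_add_self_iff {k : ℤ} {a : g} : homog g σ N (k + N) a ↔ homog g σ N k a := by
  rw [homog, homog, zpow_add₀ (eps_ne_zero N), zpow_natCast, eps_pow_self, mul_one]

lemma homog_lie {m n : ℤ} {a b : g} (ha : homog g σ N m a) (hb : homog g σ N n b) :
    homog g σ N (m + n) ⁅a, b⁆ := by
  rw [homog, LieEquiv.map_lie, ha, hb, lie_smul, smul_lie, smul_smul, mul_comm,
    zpow_add₀ (eps_ne_zero N)]

lemma sGen_lie {m n : ℤ} {a b : g} (ha : homog g σ N m a) (hb : homog g σ N n b) :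
    ⁅sGen g σ N m a ha, sGen g σ N n b hb⁆ = sGen g σ N (m + n) ⁅a, b⁆ (homog_lie ha hb) := by
  apply Subtype.ext
  show ⁅LaurentPolynomial.T m ⊗ₜ[ℂ] a, LaurentPolynomial.T n ⊗ₜ[ℂ] b⁆ =
    LaurentPolynomial.T (m + n) ⊗ₜ[ℂ] ⁅a, b⁆
  rw [LaurentPolynomial.T_add]
  rfl

lemma span_preimage_genSet :
    Submodule.span ℂ (((↑) : Loop g σ N → Amb g) ⁻¹' genSet g σ N) = ⊤ := by
  rw [← LieSubalgebra.coe_lieSpan_eq_span_of_forall_lie_mem_span]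
  · unfold Loop
    rw [LieSubalgebra.lieSpan_lieSpan_coe_preimage, LieSubalgebra.top_toSubmodule]
  · rintro x ⟨k, a, ha, hx⟩ y ⟨l, b, hb, hy⟩
    obtain rfl : x = sGen g σ N k a ha := Subtype.ext hx
    obtain rfl : y = sGen g σ N l b hb := Subtype.ext hy
    rw [sGen_lie]
    exact Submodule.subset_span ⟨k + l, _, homog_lie ha hb, rfl⟩

lemma Loop.linearMap_ext {M : Type} [AddCommGroup M] [Module ℂ M] {f f' : Loop g σ N →ₗ[ℂ] M}
    (h : ∀ (k : ℤ) (a : g) (ha : homog g σ N k a), f (sGen g σ N k a ha) = f' (sGen g σ N k a ha)) :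
    f = f' := by
  refine LinearMap.ext_on span_preimage_genSet ?_
  rintro u ⟨k, a, ha, hu⟩
  obtain rfl : u = sGen g σ N k a ha := Subtype.ext hu
  exact h k a ha

lemma Loop.lie_eq_of_sGen {M : Type} [LieRing M] [LieAlgebra ℂ M]
    {q r s : Loop g σ N →ₗ[ℂ] M} {c : Loop g σ N →ₗ[ℂ] Loop g σ N →ₗ[ℂ] ℂ} {T : M}
    (h : ∀ (k l : ℤ) (a b : g) (ha : homog g σ N k a) (hb : homog g σ N l b),
      ⁅q (sGen g σ N k a ha), r (sGen g σ N l b hb)⁆ =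
        s ⁅sGen g σ N k a ha, sGen g σ N l b hb⁆ + c (sGen g σ N k a ha) (sGen g σ N l b hb) • T)
    (u v : Loop g σ N) : ⁅q u, r v⁆ = s ⁅u, v⁆ + c u v • T := by
  have : (LieModule.toEnd ℂ M M : M →ₗ[ℂ] Module.End ℂ M).compl₁₂ q r =
      (LieModule.toEnd ℂ (Loop g σ N) (Loop g σ N) :
        Loop g σ N →ₗ[ℂ] Module.End ℂ (Loop g σ N)).compr₂ s +
      c.compr₂ (LinearMap.toSpanSingleton ℂ M T) :=
    Loop.linearMap_ext fun k a ha => Loop.linearMap_ext fun l b hb => by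
      simpa using h k l a b ha hb
  simpa using LinearMap.congr_fun₂ this u v

end LoopAlgebra

section Factorization
variable {g : Type} [LieRing g] [LieAlgebra ℂ g] {σ : g ≃ₗ⁅ℂ⁆ g} {N : ℕ}
  {B : LinearMap.BilinForm ℂ g} {W : Type} [AddCommGroup W] [Module ℂ W]
  {π πR : Loop g σ N →ₗ[ℂ] Module.End ℂ W} {K : Module.End ℂ W}
  {γ : Loop g σ N →ₗ[ℂ] Loop g σ N →ₗ[ℂ] ℂ} {p : Polynomial ℂ}

lemma piFun_of_homog {k : ℤ} {a : g} (h : homog g σ N k a) :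
    piFun g σ N W π a k = π (sGen g σ N k a h) :=
  dif_pos h

lemma piFun_of_not_homog {k : ℤ} {a : g} (h : ¬ homog g σ N k a) :
    piFun g σ N W π a k = 0 :=
  dif_neg h

lemma piFun_sub (a : g) :
    piFun g σ N W (π - πR) a = piFun g σ N W π a - piFun g σ N W πR a := by
  funext k
  by_cases h : homog g σ N k a
  · simp [piFun_of_homog h]
  · simp [piFun_of_not_homog h]

variable (g σ N) in
def homogInd (a : g) : ℤ → ℂ := {k | homog g σ N k a}.indicator 1

lemma homogInd_of_homog {k : ℤ} {a : g} (h : homog g σ N k a) : homogInd g σ N a k = 1 :=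
  Set.indicator_of_mem (s := {k | homog g σ N k a}) h 1

lemma homogInd_of_not_homog {k : ℤ} {a : g} (h : ¬ homog g σ N k a) :
    homogInd g σ N a k = 0 :=
  Set.indicator_of_notMem (s := {k | homog g σ N k a}) h 1

lemma homogInd_add_self (a : g) (k : ℤ) : homogInd g σ N a (k + N) = homogInd g σ N a k := by
  by_cases h : homog g σ N k a
  · rw [homogInd_of_homog h, homogInd_of_homog (homog_add_self_iff.mpr h)]
  · rw [homogInd_of_not_homog h, homogInd_of_not_homog (homog_add_self_iff.not.mpr h)]

lemma IsHatMod.piFun_lie (hmod : IsHatMod g σ N W π K γ) (hγ : IsGamma g σ N B γ)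
    (a b : g) (k l : ℤ) :
    ⁅piFun g σ N W π a k, piFun g σ N W π b l⁆ =
      (homogInd g σ N a k * homogInd g σ N b l) • piFun g σ N W π ⁅a, b⁆ (k + l) +
      (homogInd g σ N a k * homogInd g σ N b l) •
        (if k + l = 0 then ((k : ℂ) / N * B a b) • K else 0) := by
  by_cases ha : homog g σ N k a
  · by_cases hb : homog g σ N l b
    · have := hmod.2 (sGen g σ N k a ha) (sGen g σ N l b hb)
      rw [sGen_lie, hγ] at this
      simp only [homogInd_of_homog ha, homogInd_of_homog hb, one_mul, one_smul,
        piFun_of_homog ha, piFun_of_homog hb, piFun_of_homog (homog_lie ha hb),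
        Ring.lie_def, this, ite_smul, zero_smul]
    · simp [piFun_of_not_homog hb, homogInd_of_not_homog hb]
  · simp [piFun_of_not_homog ha, homogInd_of_not_homog ha]

lemma IsHatMod.lie_piFun_eq_zero (hmod : IsHatMod g σ N W π K γ) (a : g) (k : ℤ) :
    ⁅K, piFun g σ N W π a k⁆ = 0 := by
  by_cases h : homog g σ N k a
  · rw [piFun_of_homog h, Ring.lie_def, hmod.1, sub_self]
  · rw [piFun_of_not_homog h, lie_zero]

lemma IsPiR.isSplit_piFun (hπR : IsPiR g σ N W π πR) (hN : 0 < N) (hp : p ≠ 0)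
    (hCp : ∀ (i : ℤ) (a : g), homog g σ N i a → memE W (polyAct N W p (piFun g σ N W π a)))
    {i : ℤ} {a : g} (ha : homog g σ N i a) :
    IsSplit N p (piFun g σ N W π a) (piFun g σ N W πR a) := by
  obtain ⟨e, he, ⟨q, hq, hqe⟩, hπRe⟩ := hπR a ⟨i, ha⟩
  have hsplit : IsSplit N p (piFun g σ N W π a) e := by
    refine ⟨he, eq_zero_of_memE_of_polyAct_eq_zero hN hq ?_ ?_⟩
    · rw [polyAct_sub]
      exact memE_sub (hCp i a ha) (memE_polyAct p he)
    · rw [polyAct_polyAct_comm, hqe]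
      exact map_zero _
  convert hsplit using 1
  funext k
  by_cases hk : homog g σ N k a
  · rw [piFun_of_homog hk, hπRe k hk]
  · rw [piFun_of_not_homog hk, hsplit.eq_zero_off_periodic hN hp (fun _ => homog_add_self_iff)
      (fun _ => piFun_of_not_homog) hk]

lemma lie_sGen_of_isSplit (hN : 0 < N) (hp : p ≠ 0) (hγ : IsGamma g σ N B γ)
    (hmod : IsHatMod g σ N W π K γ)
    (hsplit : ∀ (i : ℤ) (a : g), homog g σ N i a →
      IsSplit N p (piFun g σ N W π a) (piFun g σ N W πR a))
    {m n : ℤ} {a b : g} (ha : homog g σ N m a) (hb : homog g σ N n b) :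
    let x := sGen g σ N m a ha
    let y := sGen g σ N n b hb
    ⁅πR x, πR y⁆ = πR ⁅x, y⁆ + γ x y • K ∧ ⁅πR x, (π - πR) y⁆ = 0 ∧
      ⁅(π - πR) x, (π - πR) y⁆ = (π - πR) ⁅x, y⁆ := by
  intro x y
  obtain ⟨hRR, hRE, hEE⟩ := (hsplit m a ha).lie_parts_of_lie hN hp (hsplit n b hb)
    (hsplit _ _ (homog_lie ha hb)) (homogInd_add_self a) (homogInd_add_self b)
    (fun l w => ⟨1 - l, fun k hk => by simp [show k + l ≠ 0 by omega]⟩)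
    (fun k w => ⟨1 - k, fun l hl => by simp [show k + l ≠ 0 by omega]⟩)
    (hmod.piFun_lie hγ a b) m n
  simp only [homogInd_of_homog ha, homogInd_of_homog hb, one_mul, one_smul, piFun_of_homog ha,
    piFun_of_homog hb, piFun_of_homog (homog_lie ha hb)] at hRR hRE hEE
  simp only [x, y, sGen_lie, LinearMap.sub_apply]
  rw [hγ, ite_smul, zero_smul]
  exact ⟨hRR, hRE, hEE⟩

lemma lie_eq_of_isSplit (hN : 0 < N) (hp : p ≠ 0) (hγ : IsGamma g σ N B γ)
    (hmod : IsHatMod g σ N W π K γ)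
    (hsplit : ∀ (i : ℤ) (a : g), homog g σ N i a →
      IsSplit N p (piFun g σ N W π a) (piFun g σ N W πR a)) :
    (∀ u, ⁅K, πR u⁆ = 0) ∧ (∀ u v, ⁅πR u, πR v⁆ = πR ⁅u, v⁆ + γ u v • K) ∧
      (∀ u v, ⁅πR u, (π - πR) v⁆ = 0) ∧ (∀ u v, ⁅(π - πR) u, (π - πR) v⁆ = (π - πR) ⁅u, v⁆) := by
  have hgen {m n : ℤ} {a b : g} (ha : homog g σ N m a) (hb : homog g σ N n b) :=
    lie_sGen_of_isSplit hN hp hγ hmod hsplit ha hb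
  refine ⟨fun u => ?_, Loop.lie_eq_of_sGen fun k l a b ha hb => (hgen ha hb).1,
    fun u v => ?_, fun u v => ?_⟩
  · have : (LieModule.toEnd ℂ _ _ K).comp πR = 0 := Loop.linearMap_ext fun k a ha => by
      simpa [piFun_of_homog ha] using
        (hsplit k a ha).lie_eq_zero hN hp K (hmod.lie_piFun_eq_zero a) k
    simpa using LinearMap.congr_fun this u
  · simpa only [smul_zero, add_zero, LinearMap.zero_apply] using Loop.lie_eq_of_sGen
      (q := πR) (r := π - πR) (s := 0) (c := γ) (T := (0 : Module.End ℂ W))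
      (fun k l a b ha hb => by
        simpa only [smul_zero, add_zero, LinearMap.zero_apply] using (hgen ha hb).2.1) u v
  · simpa only [smul_zero, add_zero] using Loop.lie_eq_of_sGen (q := π - πR) (r := π - πR)
      (s := π - πR) (c := γ) (T := (0 : Module.End ℂ W))
      (fun k l a b ha hb => by simpa only [smul_zero, add_zero] using (hgen ha hb).2.2) u v

end Factorization

theorem statement0_general
    (g : Type) [LieRing g] [LieAlgebra ℂ g]
    (N : ℕ) (hN : 0 < N) (σ : g ≃ₗ⁅ℂ⁆ g)
    (B : LinearMap.BilinForm ℂ g)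
    (W : Type) [AddCommGroup W] [Module ℂ W]
    (π πR : Loop g σ N →ₗ[ℂ] Module.End ℂ W) (K : Module.End ℂ W)
    (γ : Loop g σ N →ₗ[ℂ] Loop g σ N →ₗ[ℂ] ℂ) (hγ : IsGamma g σ N B γ)
    (hmod : IsHatMod g σ N W π K γ)
    (hC : InCatC g σ N W π)
    (hπR : IsPiR g σ N W π πR) :
    (∀ u, K * πR u = πR u * K) ∧
    (∀ u v, πR u * πR v - πR v * πR u = πR ⁅u, v⁆ + γ u v • K) ∧
    (∀ u v, (π - πR) u * (π - πR) v - (π - πR) v * (π - πR) u = (π - πR) ⁅u, v⁆) ∧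
    (∀ u v, πR u * (π - πR) v = (π - πR) v * πR u) ∧
    IsRestricted g σ N W πR ∧
    (∃ p : Polynomial ℂ, p ≠ 0 ∧
      ∀ (k : ℤ) (a : g) (h : ∀ i : ℕ, homog g σ N (k + N * i) a),
        (π - πR) (sPolyGen g σ N p k a h) = 0) ∧
    (IsIrred g σ N W π K → ∀ S : Submodule ℂ W, (∀ x ∈ S, K x ∈ S) →
      (∀ u, ∀ x ∈ S, πR u x ∈ S) → (∀ u, ∀ x ∈ S, (π - πR) u x ∈ S) →
      S = ⊥ ∨ S = ⊤) := by
  obtain ⟨p, hp, hCp⟩ := hC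
  have hsplit (i : ℤ) (a : g) (ha : homog g σ N i a) := hπR.isSplit_piFun hN hp hCp ha
  obtain ⟨hKR, hRR, hRE, hEE⟩ := lie_eq_of_isSplit hN hp hγ hmod hsplit
  refine ⟨fun u => ?_, fun u v => ?_, fun u v => ?_, fun u v => ?_, ?_, ?_, ?_⟩
  · rw [← sub_eq_zero, ← Ring.lie_def, hKR]
  · rw [← Ring.lie_def, hRR]
  · rw [← Ring.lie_def, hEE]
  · rw [← sub_eq_zero, ← Ring.lie_def, hRE]
  · intro w i a ha
    obtain ⟨M, hM⟩ := (hsplit i a ha).1 w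
    exact ⟨M, fun k hk h => by simpa [piFun_of_homog h] using hM k hk⟩
  · refine ⟨p, hp, fun k a h => ?_⟩
    calc (π - πR) (sPolyGen g σ N p k a h)
        = polyAct N W p (piFun g σ N W (π - πR) a) k := by
          simp only [sPolyGen, map_sum, map_smul, polyAct_apply, piFun_of_homog (h _)]
      _ = 0 := by rw [piFun_sub, (hsplit _ a (h 0)).2]; rfl
  · intro hirr S hK hR hE
    refine hirr.2 S hK fun u x hx => ?_
    simpa using S.add_mem (hR u x hx) (hE u x hx)

/-- Factorization of a category-`C` module structure `(π, K)` on `W`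
into `π_R` (restricted) and `π_E = π − π_R` (annihilated by a polynomial):
(a) `(π_R, K)` is again a `ĝ[σ]`-module structure; (b) `π_E` is a Lie algebra
homomorphism; (c) `[π_R(u), π_E(v)] = 0`; (d) `(W, (π_R, K))` is restricted;
(e) there is a nonzero `p` with `π_E((s^k p(s^N)) ⊗ a) = 0` for all `k` and `a ∈ g_k`;
(f) if `(W, (π, K))` is irreducible then the only subspaces invariant under `K` and all
`π_R(u)`, `π_E(v)` are `0` and `W`. -/
theorem statement0
    (g : Type) [LieRing g] [LieAlgebra ℂ g] [LieAlgebra.IsSimple ℂ g]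
    [FiniteDimensional ℂ g]
    (N : ℕ) (hN : 0 < N) (σ : g ≃ₗ⁅ℂ⁆ g) (hσ : ∀ a : g, (⇑σ)^[N] a = a)
    (B : LinearMap.BilinForm ℂ g)
    (hBsymm : ∀ a b : g, B a b = B b a)
    (hBinv : ∀ a b c : g, B ⁅a, b⁆ c = B a ⁅b, c⁆)
    (hBnd : ∀ a : g, (∀ b : g, B a b = 0) → a = 0)
    (W : Type) [AddCommGroup W] [Module ℂ W]
    (π πR : Loop g σ N →ₗ[ℂ] Module.End ℂ W) (K : Module.End ℂ W)
    (γ : Loop g σ N →ₗ[ℂ] Loop g σ N →ₗ[ℂ] ℂ) (hγ : IsGamma g σ N B γ)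
    (hmod : IsHatMod g σ N W π K γ)
    (hC : InCatC g σ N W π)
    (hπR : IsPiR g σ N W π πR) :
    (∀ u, K * πR u = πR u * K) ∧
    (∀ u v, πR u * πR v - πR v * πR u = πR ⁅u, v⁆ + γ u v • K) ∧
    (∀ u v, (π - πR) u * (π - πR) v - (π - πR) v * (π - πR) u = (π - πR) ⁅u, v⁆) ∧
    (∀ u v, πR u * (π - πR) v = (π - πR) v * πR u) ∧
    IsRestricted g σ N W πR ∧
    (∃ p : Polynomial ℂ, p ≠ 0 ∧
      ∀ (k : ℤ) (a : g) (h : ∀ i : ℕ, homog g σ N (k + N * i) a),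
        (π - πR) (sPolyGen g σ N p k a h) = 0) ∧
    (IsIrred g σ N W π K → ∀ S : Submodule ℂ W, (∀ x ∈ S, K x ∈ S) →
      (∀ u, ∀ x ∈ S, πR u x ∈ S) → (∀ u, ∀ x ∈ S, (π - πR) u x ∈ S) →
      S = ⊥ ∨ S = ⊤) :=
  statement0_general g N hN σ B W π πR K γ hγ hmod hC hπR

end Twisted
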